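/- Let R ≥ 1, ε₀ ∈ (0, 1/4), ξ ∈ ℝ^N, and let H : B_R → ℝ satisfy ‖H‖_{W¹_∞(B_R)} ≤ ε₀, i.e. |H(y)| ≤ ε₀ and |H(y) − H(z)| ≤ ε₀|y − z| for all y, z ∈ B_R. Define the Hanzawa map Φ(y) = (1 + R⁻¹H(y))y + ξ. Then |Φ(y) − Φ(z)| ≥ (1 − 2ε₀)|y − z| ≥ ½|y − z| for all y, z ∈ B_R; in particular Φ is injective on B_R. -/

import Mathlib

/-!
Split `Φ y - Φ z = (1 + R⁻¹ H y) • (y - z) + R⁻¹ (H y - H z) • z`. The first term has norm at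
least `(1 - ε₀) ‖y - z‖`; in the second, `‖z‖ < R` absorbs the factor `R⁻¹`, so it has norm at
most `ε₀ ‖y - z‖`. A lower Lipschitz bound with a positive constant forces injectivity.
-/

open Metric

section NormedSpace

variable {E : Type*} [SeminormedAddCommGroup E] [NormedSpace ℝ E]

theorem mul_norm_sub_le_norm_one_add_smul_sub {a b c d : ℝ} (y z : E) (hc : |c| ≤ a)
    (hcd : |c - d| * ‖z‖ ≤ b * ‖y - z‖) :
    (1 - a - b) * ‖y - z‖ ≤ ‖(1 + c) • y - (1 + d) • z‖ := by
  have hsplit : (1 + c) • y - (1 + d) • z = (1 + c) • (y - z) + (c - d) • z := by module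
  have hmain : (1 - a) * ‖y - z‖ ≤ ‖(1 + c) • (y - z)‖ := by
    rw [norm_smul, Real.norm_eq_abs]
    gcongr
    calc 1 - a ≤ 1 + c := by linarith [neg_abs_le c]
      _ ≤ |1 + c| := le_abs_self _
  have herr : ‖(c - d) • z‖ ≤ b * ‖y - z‖ := by rwa [norm_smul, Real.norm_eq_abs]
  rw [hsplit]
  linarith [norm_sub_le_norm_add ((1 + c) • (y - z)) ((c - d) • z)]

theorem mul_norm_sub_le_norm_hanzawa_sub {R ε : ℝ} (hR : 1 ≤ R) {H : E → ℝ} {y z : E}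
    (hz : ‖z‖ < R) (hHy : |H y| ≤ ε) (hlip : |H y - H z| ≤ ε * ‖y - z‖) :
    (1 - 2 * ε) * ‖y - z‖ ≤ ‖(1 + R⁻¹ * H y) • y - (1 + R⁻¹ * H z) • z‖ := by
  have hR₀ : 0 < R := by linarith
  have hε : 0 ≤ ε := (abs_nonneg _).trans hHy
  have hc : |R⁻¹ * H y| ≤ ε := by
    rw [abs_mul, abs_inv, abs_of_pos hR₀]
    calc R⁻¹ * |H y| ≤ 1 * ε := by gcongr; exact inv_le_one_of_one_le₀ hR
      _ = ε := one_mul ε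
  have hcd : |R⁻¹ * H y - R⁻¹ * H z| * ‖z‖ ≤ ε * ‖y - z‖ := by
    rw [← mul_sub, abs_mul, abs_inv, abs_of_pos hR₀]
    calc R⁻¹ * |H y - H z| * ‖z‖ ≤ R⁻¹ * (ε * ‖y - z‖) * R := by gcongr
      _ = ε * ‖y - z‖ := by field_simp
  convert mul_norm_sub_le_norm_one_add_smul_sub y z hc hcd using 2
  ring

end NormedSpace

theorem Set.injOn_of_mul_norm_sub_le {E F : Type*} [NormedAddCommGroup E]
    [SeminormedAddCommGroup F] {f : E → F} {s : Set E} {c : ℝ} (hc : 0 < c)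
    (h : ∀ y ∈ s, ∀ z ∈ s, c * ‖y - z‖ ≤ ‖f y - f z‖) : Set.InjOn f s := by
  intro y hy z hz hyz
  have hle : c * ‖y - z‖ ≤ 0 := by simpa [hyz] using h y hy z hz
  exact sub_eq_zero.mp (norm_le_zero_iff.mp (nonpos_of_mul_nonpos_right hle hc))

/-- **Injectivity of the Hanzawa transform.**
Let `R ≥ 1`, `ε₀ ∈ (0, 1/4)`, `ξ ∈ ℝ^N`, and let `H : B_R → ℝ` satisfy
`‖H‖_{W¹_∞(B_R)} ≤ ε₀`, i.e. `|H(y)| ≤ ε₀` and `|H(y) − H(z)| ≤ ε₀ |y − z|` for all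
`y, z ∈ B_R`.  Define the Hanzawa map `Φ(y) = (1 + R⁻¹ H(y)) y + ξ`.  Then
`|Φ(y) − Φ(z)| ≥ (1 − 2ε₀)|y − z| ≥ ½ |y − z|` for all `y, z ∈ B_R`; in particular
`Φ` is injective on `B_R`. -/
theorem hanzawa_transform_injective
    (N : ℕ) (R ε₀ : ℝ) (ξ : EuclideanSpace ℝ (Fin N))
    (H : EuclideanSpace ℝ (Fin N) → ℝ)
    (hR : 1 ≤ R) (hε : ε₀ ∈ Set.Ioo (0 : ℝ) (1 / 4))
    (hbd : ∀ y ∈ Metric.ball (0 : EuclideanSpace ℝ (Fin N)) R, |H y| ≤ ε₀)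
    (hlip : ∀ y ∈ Metric.ball (0 : EuclideanSpace ℝ (Fin N)) R,
      ∀ z ∈ Metric.ball (0 : EuclideanSpace ℝ (Fin N)) R,
        |H y - H z| ≤ ε₀ * ‖y - z‖) :
    (∀ y ∈ Metric.ball (0 : EuclideanSpace ℝ (Fin N)) R,
      ∀ z ∈ Metric.ball (0 : EuclideanSpace ℝ (Fin N)) R,
        (1 - 2 * ε₀) * ‖y - z‖ ≤
            ‖((1 + R⁻¹ * H y) • y + ξ) - ((1 + R⁻¹ * H z) • z + ξ)‖ ∧
        (1 / 2) * ‖y - z‖ ≤ (1 - 2 * ε₀) * ‖y - z‖) ∧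
    Set.InjOn (fun y => (1 + R⁻¹ * H y) • y + ξ)
      (Metric.ball (0 : EuclideanSpace ℝ (Fin N)) R) := by
  have hcoeff : 1 / 2 ≤ 1 - 2 * ε₀ := by linarith [hε.2]
  have hlower : ∀ y ∈ ball (0 : EuclideanSpace ℝ (Fin N)) R, ∀ z ∈ ball 0 R,
      (1 - 2 * ε₀) * ‖y - z‖ ≤ ‖((1 + R⁻¹ * H y) • y + ξ) - ((1 + R⁻¹ * H z) • z + ξ)‖ := by
    intro y hy z hz
    rw [add_sub_add_right_eq_sub]
    exact mul_norm_sub_le_norm_hanzawa_sub hR (mem_ball_zero_iff.mp hz) (hbd y hy)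
      (hlip y hy z hz)
  refine ⟨fun y hy z hz => ⟨hlower y hy z hz, by gcongr⟩, ?_⟩
  exact Set.injOn_of_mul_norm_sub_le (by linarith) hlower
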